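/- Let α > 0 and let f : M → ℝ be continuously differentiable with compact support in the upper half-plane M. Then ∫_M y^{2α} |∇( y^{-α} f(x,y) )|² dx dy = ∫_{y>0} |∇f(x,y)|² dx dy + α(α−1) ∫_M |f|² dν. -/

import Mathlib

open MeasureTheory Real Set Filter Topology Function

/-!
Put `g = y^{-α} f`. On the half-plane, the product rule gives the pointwise identity
`y^{2α} |∇g|² = |∇f|² + α(α-1) f²/y² - α ∂_y (f²/y)`.
Since `tsupport f` is a compact subset of the open half-plane, `f²/y` extends by zero to a
compactly supported `C¹` function on `ℝ²`, so the integral of its `y`-derivative vanishes by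
Fubini and the fundamental theorem of calculus on each vertical line.
-/

theorem ContDiffOn.contDiff_of_tsupport_subset {𝕜 E F : Type*} [NontriviallyNormedField 𝕜]
    [NormedAddCommGroup E] [NormedSpace 𝕜 E] [NormedAddCommGroup F] [NormedSpace 𝕜 F]
    {n : WithTop ℕ∞} {f : E → F} {s : Set E} (hf : ContDiffOn 𝕜 n f s) (hs : IsOpen s)
    (hsub : tsupport f ⊆ s) : ContDiff 𝕜 n f :=
  contDiff_iff_contDiffAt.2 fun x => by
    by_cases hx : x ∈ tsupport f
    · exact hf.contDiffAt (hs.mem_nhds (hsub hx))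
    · exact contDiffAt_const.congr_of_eventuallyEq (notMem_tsupport_iff_eventuallyEq.mp hx)

section PowDiv

variable {X G : Type*} [TopologicalSpace X] [GroupWithZero G] {f : X → G} {n : ℕ}

theorem tsupport_pow_div_subset (g : X → G) (hn : n ≠ 0) :
    tsupport (fun x => f x ^ n / g x) ⊆ tsupport f :=
  closure_mono fun x hx hfx => hx (by simp [hfx, hn])

theorem HasCompactSupport.pow_div (hf : HasCompactSupport f) (g : X → G) (hn : n ≠ 0) :
    HasCompactSupport fun x => f x ^ n / g x :=
  hf.mono' ((subset_tsupport _).trans (tsupport_pow_div_subset g hn))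

end PowDiv

noncomputable section PartialDerivatives

variable {E : Type*} [NormedAddCommGroup E] [NormedSpace ℝ E]
  {f : ℝ × ℝ → E} {p : ℝ × ℝ}

def partialFst (f : ℝ × ℝ → E) (p : ℝ × ℝ) : E := deriv (fun x => f (x, p.2)) p.1

def partialSnd (f : ℝ × ℝ → E) (p : ℝ × ℝ) : E := deriv (fun y => f (p.1, y)) p.2

theorem HasFDerivAt.hasDerivAt_fst_slice {f' : ℝ × ℝ →L[ℝ] E} (hf : HasFDerivAt f f' p) :
    HasDerivAt (fun x => f (x, p.2)) (f' (1, 0)) p.1 :=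
  hf.comp_hasDerivAt p.1 ((hasDerivAt_id p.1).prodMk (hasDerivAt_const p.1 p.2))

theorem HasFDerivAt.hasDerivAt_snd_slice {f' : ℝ × ℝ →L[ℝ] E} (hf : HasFDerivAt f f' p) :
    HasDerivAt (fun y => f (p.1, y)) (f' (0, 1)) p.2 :=
  hf.comp_hasDerivAt p.2 ((hasDerivAt_const p.2 p.1).prodMk (hasDerivAt_id p.2))

theorem partialFst_eq_fderiv (hf : DifferentiableAt ℝ f p) :
    partialFst f p = fderiv ℝ f p (1, 0) :=
  hf.hasFDerivAt.hasDerivAt_fst_slice.deriv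

theorem partialSnd_eq_fderiv (hf : DifferentiableAt ℝ f p) :
    partialSnd f p = fderiv ℝ f p (0, 1) :=
  hf.hasFDerivAt.hasDerivAt_snd_slice.deriv

theorem DifferentiableAt.hasDerivAt_partialFst (hf : DifferentiableAt ℝ f p) :
    HasDerivAt (fun x => f (x, p.2)) (partialFst f p) p.1 :=
  partialFst_eq_fderiv hf ▸ hf.hasFDerivAt.hasDerivAt_fst_slice

theorem DifferentiableAt.hasDerivAt_partialSnd (hf : DifferentiableAt ℝ f p) :
    HasDerivAt (fun y => f (p.1, y)) (partialSnd f p) p.2 :=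
  partialSnd_eq_fderiv hf ▸ hf.hasFDerivAt.hasDerivAt_snd_slice

theorem ContDiff.continuous_partialFst (hf : ContDiff ℝ 1 f) : Continuous (partialFst f) := by
  have : partialFst f = fun p => fderiv ℝ f p (1, 0) :=
    funext fun p => partialFst_eq_fderiv ((hf.differentiable one_ne_zero) p)
  rw [this]
  exact (hf.continuous_fderiv one_ne_zero).clm_apply continuous_const

theorem ContDiff.continuous_partialSnd (hf : ContDiff ℝ 1 f) : Continuous (partialSnd f) := by
  have : partialSnd f = fun p => fderiv ℝ f p (0, 1) :=
    funext fun p => partialSnd_eq_fderiv ((hf.differentiable one_ne_zero) p)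
  rw [this]
  exact (hf.continuous_fderiv one_ne_zero).clm_apply continuous_const

theorem support_partialFst_subset : support (partialFst f) ⊆ tsupport f := by
  intro p hp
  by_contra hnot
  have hslice : (fun x => f (x, p.2)) =ᶠ[𝓝 p.1] fun _ => 0 :=
    (notMem_tsupport_iff_eventuallyEq.mp hnot).comp_tendsto
      ((Continuous.prodMk_left p.2).tendsto p.1)
  exact hp (by simp [partialFst, hslice.deriv_eq])

theorem support_partialSnd_subset : support (partialSnd f) ⊆ tsupport f := by
  intro p hp
  by_contra hnot
  have hslice : (fun y => f (p.1, y)) =ᶠ[𝓝 p.2] fun _ => 0 :=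
    (notMem_tsupport_iff_eventuallyEq.mp hnot).comp_tendsto
      ((Continuous.prodMk_right p.1).tendsto p.2)
  exact hp (by simp [partialSnd, hslice.deriv_eq])

theorem HasCompactSupport.partialFst (hf : HasCompactSupport f) :
    HasCompactSupport (partialFst f) :=
  hf.mono' support_partialFst_subset

theorem HasCompactSupport.partialSnd (hf : HasCompactSupport f) :
    HasCompactSupport (partialSnd f) :=
  hf.mono' support_partialSnd_subset

theorem ContDiff.integrable_partialSnd (hf : ContDiff ℝ 1 f) (hcs : HasCompactSupport f) :
    Integrable (partialSnd f) :=
  hf.continuous_partialSnd.integrable_of_hasCompactSupport hcs.partialSnd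

theorem integral_partialSnd_eq_zero (hf : ContDiff ℝ 1 f) (hcs : HasCompactSupport f) :
    ∫ p, partialSnd f p = 0 := by
  have hint := hf.integrable_partialSnd hcs
  rw [Measure.volume_eq_prod] at hint ⊢
  rw [integral_prod _ hint]
  have hslice (x : ℝ) : ∫ y, partialSnd f (x, y) = 0 := by
    have hemb : IsClosedEmbedding (Prod.mk x : ℝ → ℝ × ℝ) :=
      .of_continuous_injective_isClosedMap (by fun_prop) (Prod.mk_right_injective x)
        (isClosedMap_prodMk_left x)
    exact integral_eq_zero_of_hasDerivAt_of_integrable (f := fun y => f (x, y))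
      (fun y => (hf.differentiable one_ne_zero (x, y)).hasDerivAt_partialSnd)
      ((hf.continuous_partialSnd.comp (.prodMk_right x)).integrable_of_hasCompactSupport
        (hcs.partialSnd.comp_isClosedEmbedding hemb))
      ((hf.continuous.comp (.prodMk_right x)).integrable_of_hasCompactSupport
        (hcs.comp_isClosedEmbedding hemb))
  simp [hslice]

theorem setIntegral_partialSnd_eq_zero (hf : ContDiff ℝ 1 f) (hcs : HasCompactSupport f)
    {s : Set (ℝ × ℝ)} (hs : tsupport f ⊆ s) : ∫ p in s, partialSnd f p = 0 := by
  rw [setIntegral_eq_integral_of_forall_compl_eq_zero fun p hp =>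
    notMem_support.mp fun hp' => hp (hs (support_partialSnd_subset hp'))]
  exact integral_partialSnd_eq_zero hf hcs

end PartialDerivatives

theorem ContDiff.integrable_partialFst_sq_add_partialSnd_sq {f : ℝ × ℝ → ℝ}
    (hf : ContDiff ℝ 1 f) (hcs : HasCompactSupport f) :
    Integrable fun p => partialFst f p ^ 2 + partialSnd f p ^ 2 := by
  have hcs₁ : HasCompactSupport fun p => partialFst f p ^ 2 :=
    hcs.partialFst.comp_left (g := fun x : ℝ => x ^ 2) (zero_pow two_ne_zero)
  have hcs₂ : HasCompactSupport fun p => partialSnd f p ^ 2 :=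
    hcs.partialSnd.comp_left (g := fun x : ℝ => x ^ 2) (zero_pow two_ne_zero)
  exact ((hf.continuous_partialFst.pow 2).integrable_of_hasCompactSupport hcs₁).add
    ((hf.continuous_partialSnd.pow 2).integrable_of_hasCompactSupport hcs₂)

theorem Continuous.integrable_sq_div_snd_sq {f : ℝ × ℝ → ℝ} (hf : Continuous f)
    (hcs : HasCompactSupport f) (hsub : tsupport f ⊆ {p : ℝ × ℝ | 0 < p.2}) :
    Integrable fun p : ℝ × ℝ => f p ^ 2 / p.2 ^ 2 :=
  (((hf.pow 2).continuousOn.div (continuous_snd.pow 2).continuousOn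
    fun _ hp => pow_ne_zero 2 (ne_of_gt hp)).continuous_of_tsupport_subset
      (isOpen_lt continuous_const continuous_snd)
      ((tsupport_pow_div_subset _ two_ne_zero).trans hsub)).integrable_of_hasCompactSupport
    (hcs.pow_div _ two_ne_zero)

theorem rpow_mul_partial_sq_add_sq_rpow_neg_mul {α : ℝ} {f : ℝ × ℝ → ℝ} {p : ℝ × ℝ}
    (hf : DifferentiableAt ℝ f p) (hp : 0 < p.2) :
    p.2 ^ (2 * α) * (partialFst (fun q => q.2 ^ (-α) * f q) p ^ 2
        + partialSnd (fun q => q.2 ^ (-α) * f q) p ^ 2) =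
      partialFst f p ^ 2 + partialSnd f p ^ 2 + α * (α - 1) * (f p ^ 2 / p.2 ^ 2)
        - α * partialSnd (fun q => f q ^ 2 / q.2) p := by
  have hx : partialFst (fun q => q.2 ^ (-α) * f q) p = p.2 ^ (-α) * partialFst f p :=
    (hf.hasDerivAt_partialFst.const_mul (p.2 ^ (-α))).deriv
  have hy : partialSnd (fun q => q.2 ^ (-α) * f q) p =
      -α * p.2 ^ (-α - 1) * f p + p.2 ^ (-α) * partialSnd f p :=
    ((hasDerivAt_rpow_const (Or.inl hp.ne')).mul hf.hasDerivAt_partialSnd).deriv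
  have hdiv : partialSnd (fun q => f q ^ 2 / q.2) p =
      (2 * f p * partialSnd f p * p.2 - f p ^ 2) / p.2 ^ 2 := by
    refine ((hf.hasDerivAt_partialSnd.pow 2).div (hasDerivAt_id p.2) hp.ne').deriv.trans ?_
    simp
  have hpow : p.2 ^ (2 * α) = ((p.2 ^ (-α)) ^ 2)⁻¹ := by
    rw [← rpow_natCast, ← rpow_mul hp.le, ← rpow_neg hp.le]
    ring_nf
  have hpred : p.2 ^ (-α - 1) = p.2 ^ (-α) / p.2 := by
    rw [rpow_sub hp, rpow_one]
  have hne : p.2 ^ (-α) ≠ 0 := (rpow_pos_of_pos hp _).ne'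
  rw [hx, hy, hdiv, hpred, hpow]
  field_simp
  ring

theorem hyperbolic_dirichlet_weighted_form_general (α : ℝ)
    (f : ℝ × ℝ → ℝ) (hf : ContDiff ℝ 1 f) (hsupp : HasCompactSupport f)
    (hsub : tsupport f ⊆ {p : ℝ × ℝ | 0 < p.2})
    (g : ℝ × ℝ → ℝ) (hg : ∀ q : ℝ × ℝ, g q = q.2 ^ (-α) * f q) :
    (∫ p in {p : ℝ × ℝ | 0 < p.2},
        p.2 ^ (2 * α) *
          ((deriv (fun x : ℝ => g (x, p.2)) p.1) ^ 2
            + (deriv (fun y : ℝ => g (p.1, y)) p.2) ^ 2)) =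
      (∫ p in {p : ℝ × ℝ | 0 < p.2},
          ((deriv (fun x : ℝ => f (x, p.2)) p.1) ^ 2
            + (deriv (fun y : ℝ => f (p.1, y)) p.2) ^ 2))
        + α * (α - 1) * ∫ p in {p : ℝ × ℝ | 0 < p.2}, f p ^ 2 / p.2 ^ 2 := by
  obtain rfl : g = fun q => q.2 ^ (-α) * f q := funext hg
  set S : Set (ℝ × ℝ) := {p | 0 < p.2}
  have hS : IsOpen S := isOpen_lt continuous_const continuous_snd
  have hdiv_supp : tsupport (fun q : ℝ × ℝ => f q ^ 2 / q.2) ⊆ S :=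
    (tsupport_pow_div_subset _ two_ne_zero).trans hsub
  have hdiv : ContDiff ℝ 1 fun q : ℝ × ℝ => f q ^ 2 / q.2 :=
    ((hf.pow 2).contDiffOn.div contDiffOn_snd fun _ hp => ne_of_gt hp).contDiff_of_tsupport_subset
      hS hdiv_supp
  have hdiv_cs := hsupp.pow_div (fun q : ℝ × ℝ => q.2) two_ne_zero
  have hquot := hf.continuous.integrable_sq_div_snd_sq hsupp hsub
  have hgrad := hf.integrable_partialFst_sq_add_partialSnd_sq hsupp
  have hsum : IntegrableOn (fun p => partialFst f p ^ 2 + partialSnd f p ^ 2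
      + α * (α - 1) * (f p ^ 2 / p.2 ^ 2)) S :=
    (hgrad.add (hquot.const_mul _)).integrableOn
  change ∫ p in S, p.2 ^ (2 * α) * (partialFst (fun q => q.2 ^ (-α) * f q) p ^ 2
      + partialSnd (fun q => q.2 ^ (-α) * f q) p ^ 2) =
    (∫ p in S, partialFst f p ^ 2 + partialSnd f p ^ 2)
      + α * (α - 1) * ∫ p in S, f p ^ 2 / p.2 ^ 2
  rw [setIntegral_congr_fun hS.measurableSet fun p hp =>
      rpow_mul_partial_sq_add_sq_rpow_neg_mul (hf.differentiable one_ne_zero p) hp,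
    integral_sub hsum ((hdiv.integrable_partialSnd hdiv_cs).const_mul α).integrableOn,
    integral_add hgrad.integrableOn ((hquot.const_mul _).integrableOn (s := S)),
    integral_const_mul, integral_const_mul,
    setIntegral_partialSnd_eq_zero hdiv hdiv_cs hdiv_supp, mul_zero, sub_zero]

/-- The hyperbolic Dirichlet form as a weighted Euclidean Sobolev form: for `α > 0`
and `f` a `C¹` function compactly supported in the upper half-plane,
`∫_M y^{2α} |∇(y^{-α} f)|² dx dy = ∫_{y>0} |∇f|² dx dy + α(α−1) ∫_M |f|² dν`,
where `dν = y⁻² dx dy`. -/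
theorem hyperbolic_dirichlet_weighted_form (α : ℝ) (hα : 0 < α)
    (f : ℝ × ℝ → ℝ) (hf : ContDiff ℝ 1 f) (hsupp : HasCompactSupport f)
    (hsub : tsupport f ⊆ {p : ℝ × ℝ | 0 < p.2})
    (g : ℝ × ℝ → ℝ) (hg : ∀ q : ℝ × ℝ, g q = q.2 ^ (-α) * f q) :
    (∫ p in {p : ℝ × ℝ | 0 < p.2},
        p.2 ^ (2 * α) *
          ((deriv (fun x : ℝ => g (x, p.2)) p.1) ^ 2
            + (deriv (fun y : ℝ => g (p.1, y)) p.2) ^ 2)) =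
      (∫ p in {p : ℝ × ℝ | 0 < p.2},
          ((deriv (fun x : ℝ => f (x, p.2)) p.1) ^ 2
            + (deriv (fun y : ℝ => f (p.1, y)) p.2) ^ 2))
        + α * (α - 1) * ∫ p in {p : ℝ × ℝ | 0 < p.2}, f p ^ 2 / p.2 ^ 2 :=
  hyperbolic_dirichlet_weighted_form_general α f hf hsupp hsub g hg
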